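/- arXiv:2302.00564 — 3 statements merged into one kernel-verified Lean document; each statement's English description precedes it below -/
import Mathlib

section
/- Let G be a directed acyclic graph and v → c an edge such that the only path from v to c is the edge itself. Then the graph G′ obtained by removing edge v → c, adding edge c → v, adding edges p → c for every parent p of v, and adding edges q → v for every parent q of c other than v, is still acyclic. -/
/-- A directed graph (given by its edge relation) is acyclic if no vertex lies
on a directed cycle. -/
def Acyclic {V : Type*} (E : V → V → Prop) : Prop :=
  ∀ x, ¬ Relation.TransGen E x x

/-- Reversing edge v → c: the new parents of c are (pa(c) ∖ {v}) ∪ pa(v), and the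
new parents of v are (pa(c) ∖ {v}) ∪ pa(v) ∪ {c}; all other edges unchanged. -/
def reverseEdge {V : Type*} (E : V → V → Prop) (v c : V) : V → V → Prop :=
  fun a b =>
    (b = c ∧ ((E a c ∧ a ≠ v) ∨ E a v)) ∨
    (b = v ∧ ((E a c ∧ a ≠ v) ∨ E a v ∨ a = c)) ∨
    (b ≠ c ∧ b ≠ v ∧ E a b)

/-- If G is a DAG with edge v → c such that the only path from v to c is the edge
itself, then the graph obtained by reversing the edge v → c is still acyclic. -/
theorem reverseEdge_acyclic {V : Type*} (E : V → V → Prop) (v c : V)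
    (hacyc : Acyclic E) (hedge : E v c)
    (huniq : ∀ w, E v w → Relation.ReflTransGen E w c → w = c) :
    Acyclic (reverseEdge E v c) := by
  have hEvv : ¬ E v v := fun h => hacyc v (.single h)
  -- L1: any new edge with target ≠ v corresponds to an old path
  have L1 : ∀ a b, reverseEdge E v c a b → b ≠ v → Relation.TransGen E a b := by
    rintro a b (⟨rfl, ⟨hac, -⟩ | hav⟩ | ⟨rfl, -⟩ | ⟨-, -, hab⟩) hbv
    · exact .single hac
    · exact .head hav (.single hedge)
    · exact absurd rfl hbv
    · exact .single hab
  -- L2: any new edge into v comes from c or from an old path to c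
  have L2 : ∀ a, reverseEdge E v c a v → a = c ∨ Relation.TransGen E a c := by
    rintro a (⟨hvc, ⟨hac, -⟩ | hav⟩ | ⟨-, ⟨hac, -⟩ | hav | rfl⟩ | ⟨-, hvv, -⟩)
    · exact Or.inr (.single hac)
    · exact absurd (hvc ▸ hedge) hEvv
    · exact Or.inr (.single hac)
    · exact Or.inr (.head hav (.single hedge))
    · exact Or.inl rfl
    · exact absurd rfl hvv
  -- Lemma B: any new path into v starts at v, or at a vertex with an old path to c
  have LB : ∀ a, Relation.TransGen (reverseEdge E v c) a v →
      a = v ∨ Relation.ReflTransGen E a c := by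
    intro a h
    induction h using Relation.TransGen.head_induction_on with
    | single h =>
      rcases L2 _ h with rfl | h
      · exact Or.inr .refl
      · exact Or.inr h.to_reflTransGen
    | head hab hbv ih =>
      rename_i a b
      rcases ih with rfl | hbc
      · rcases L2 _ hab with rfl | h
        · exact Or.inr .refl
        · exact Or.inr h.to_reflTransGen
      · rcases eq_or_ne b v with rfl | hbv'
        · rcases L2 _ hab with rfl | h
          · exact Or.inr .refl
          · exact Or.inr h.to_reflTransGen
        · exact Or.inr ((L1 _ _ hab hbv').to_reflTransGen.trans hbc)
  -- Claim 2: no new cycle through v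
  have C2 : ¬ Relation.TransGen (reverseEdge E v c) v v := by
    intro h
    have key : ∀ b, reverseEdge E v c v b → b ≠ v ∧ b ≠ c ∧ E v b := by
      rintro b (⟨rfl, ⟨-, hvv⟩ | hvv⟩ | ⟨rfl, ⟨-, hvv⟩ | hvv | rfl⟩ | ⟨hbc, hbv, hvb⟩)
      · exact absurd rfl hvv
      · exact absurd hvv hEvv
      · exact absurd rfl hvv
      · exact absurd hvv hEvv
      · exact absurd hedge hEvv
      · exact ⟨hbv, hbc, hvb⟩
    obtain ⟨b, hvb, hbv⟩ := Relation.TransGen.head'_iff.mp h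
    obtain ⟨hbv', hbc, hEvb⟩ := key b hvb
    rcases Relation.reflTransGen_iff_eq_or_transGen.mp hbv with rfl | hbv2
    · exact hbv' rfl
    · rcases LB b hbv2 with rfl | hbc'
      · exact hbv' rfl
      · exact hbc (huniq b hEvb hbc')
  -- Claim 1: a new path is an old path or goes through v
  have C1 : ∀ a b, Relation.TransGen (reverseEdge E v c) a b →
      Relation.TransGen E a b ∨
        (Relation.ReflTransGen (reverseEdge E v c) a v ∧
         Relation.ReflTransGen (reverseEdge E v c) v b) := by
    intro a b h
    induction h with
    | single h =>
      rename_i b'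
      rcases eq_or_ne b' v with rfl | hbv
      · exact Or.inr ⟨.single h, .refl⟩
      · exact Or.inl (L1 _ _ h hbv)
    | tail hab hbd ih =>
      rename_i x d
      rcases ih with hE | ⟨hav, hvb⟩
      · rcases eq_or_ne d v with rfl | hdv
        · exact Or.inr ⟨hab.to_reflTransGen.tail hbd, .refl⟩
        · exact Or.inl (hE.trans (L1 _ _ hbd hdv))
      · exact Or.inr ⟨hav, hvb.tail hbd⟩
  intro x hx
  rcases C1 x x hx with hE | ⟨hxv, hvx⟩
  · exact hacyc x hE
  · exact C2 (Relation.TransGen.trans_right hvx (hx.trans_left hxv))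
end

section
/- Let G be a DAG and v a node with children c₁,…,c_H listed in topological order. If each edge reversal v → cₖ (performed in order k = 1,…,H) is valid, then after all H reversals the node v has no outgoing edges (v is a leaf), and at each step k the edge v → cₖ is the unique directed path from v to cₖ so the reversal preserves acyclicity. -/
/-- The edge v → c is the unique directed path from v to c. -/
def UniquePath {V : Type*} (E : V → V → Prop) (v c : V) : Prop :=
  E v c ∧ ∀ w, E v w → Relation.ReflTransGen E w c → w = c

lemma tg_lt {V : Type*} {E : V → V → Prop} {f : V → ℕ}
    (hf : ∀ a b, E a b → f a < f b) {x y : V}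
    (h : Relation.TransGen E x y) : f x < f y := by
  induction h with
  | single h => exact hf _ _ h
  | tail _ hbc ih => exact ih.trans (hf _ _ hbc)

lemma rtg_le {V : Type*} {E : V → V → Prop} {f : V → ℕ}
    (hf : ∀ a b, E a b → f a < f b) {x y : V}
    (h : Relation.ReflTransGen E x y) : f x ≤ f y := by
  induction h with
  | refl => exact le_refl _
  | tail _ hbc ih => exact ih.trans (hf _ _ hbc).le

lemma acyclic_of_mono {V : Type*} {E : V → V → Prop} {f : V → ℕ}
    (hf : ∀ a b, E a b → f a < f b) : Acyclic E :=
  fun x hx => lt_irrefl _ (tg_lt hf hx)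

lemma main_aux {n : ℕ} (v : Fin n) :
    ∀ (rest : List (Fin n)) (E : Fin n → Fin n → Prop) (f : Fin n → ℕ),
      (∀ x, x ≠ v → f x = 2 * (x : ℕ)) →
      (∀ c ∈ rest, f v < 2 * (c : ℕ)) →
      (∀ a b, E a b → f a < f b) →
      (∀ b, E v b ↔ b ∈ rest) →
      rest.Pairwise (· < ·) →
      (∀ j, ¬ (rest.foldl (fun R c => reverseEdge R v c) E) v j)
      ∧ ∀ (k : ℕ) (hk : k < rest.length),
          UniquePath ((rest.take k).foldl (fun R c => reverseEdge R v c) E) v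
            (rest.get ⟨k, hk⟩)
          ∧ Acyclic ((rest.take (k + 1)).foldl (fun R c => reverseEdge R v c) E) := by
  intro rest
  induction rest with
  | nil =>
      intro E f _ _ _ hch _
      refine ⟨fun j hj => ?_, fun k hk => by simp at hk⟩
      exact (List.not_mem_nil) ((hch j).mp hj)
  | cons c rest' ih =>
      intro E f hfx hfv hmono hch hsort
      have hEvc : E v c := (hch c).mpr (List.mem_cons_self)
      have hnEvv : ¬ E v v := fun h => lt_irrefl _ (hmono v v h)
      have hvc : v ≠ c := fun h => hnEvv (h ▸ hEvc)
      have fvlt : f v < 2 * (c : ℕ) := hfv c (List.mem_cons_self)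
      have hlt : ∀ b ∈ rest', c < b := fun b hb => (List.pairwise_cons.mp hsort).1 b hb
      have hnv : ∀ b ∈ rest', b ≠ v := by
        intro b hb h
        exact hnEvv (h ▸ ((hch b).mpr (List.mem_cons_of_mem c hb)))
      set E' := reverseEdge E v c with hE'
      set f' := Function.update f v (2 * (c : ℕ) + 1) with hf'
      have hf'v : f' v = 2 * (c : ℕ) + 1 := Function.update_self _ _ _
      have hf'x : ∀ x, x ≠ v → f' x = 2 * (x : ℕ) := by
        intro x hx; rw [hf', Function.update_of_ne hx]; exact hfx x hx
      have hmono' : ∀ a b, E' a b → f' a < f' b := by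
        intro a b hab
        rcases hab with ⟨hb, h⟩ | ⟨hb, h⟩ | ⟨hbc, hbv, h⟩
        · -- b = c
          rw [hb]
          have hav : a ≠ v := by
            rcases h with ⟨_, hav⟩ | hav
            · exact hav
            · intro h'; exact hnEvv (h' ▸ hav)
          rw [hf'x a hav, hf'x c (Ne.symm hvc)]
          rcases h with ⟨hac, _⟩ | hav2
          · have := hmono a c hac
            rwa [hfx a hav, hfx c (Ne.symm hvc)] at this
          · have := hmono a v hav2
            rw [hfx a hav] at this
            exact this.trans fvlt
        · -- b = v
          rw [hb, hf'v]
          rcases h with ⟨hac, hav⟩ | hav | hac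
          · rw [hf'x a hav]
            have := hmono a c hac
            rw [hfx a hav, hfx c (Ne.symm hvc)] at this
            omega
          · have hav' : a ≠ v := fun h' => hnEvv (h' ▸ hav)
            rw [hf'x a hav']
            have := hmono a v hav
            rw [hfx a hav'] at this
            omega
          · rw [hac, hf'x c (Ne.symm hvc)]
            omega
        · -- other b
          by_cases hav : a = v
          · subst hav
            have hbmem : b ∈ c :: rest' := (hch b).mp h
            have hbr : b ∈ rest' := by
              rcases List.mem_cons.mp hbmem with h' | h'
              · exact absurd h' hbc
              · exact h'
            rw [hf'v, hf'x b hbv]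
            have := hlt b hbr
            have : (c : ℕ) < (b : ℕ) := this
            omega
          · rw [hf'x a hav, hf'x b hbv]
            have := hmono a b h
            rwa [hfx a hav, hfx b hbv] at this
      have hch' : ∀ b, E' v b ↔ b ∈ rest' := by
        intro b
        constructor
        · intro hb
          rcases hb with ⟨hb, h⟩ | ⟨hb, h⟩ | ⟨hbc, hbv, h⟩
          · rcases h with ⟨_, hne⟩ | hvv
            · exact absurd rfl hne
            · exact absurd hvv hnEvv
          · rcases h with ⟨_, hne⟩ | hvv | hvc'
            · exact absurd rfl hne
            · exact absurd hvv hnEvv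
            · exact absurd hvc' hvc
          · have := (hch b).mp h
            rcases List.mem_cons.mp this with h' | h'
            · exact absurd h' hbc
            · exact h'
        · intro hb
          refine Or.inr (Or.inr ⟨fun h' => ?_, hnv b hb, (hch b).mpr (List.mem_cons_of_mem c hb)⟩)
          exact absurd (h' ▸ hlt b hb) (lt_irrefl c)
      have hfv' : ∀ c' ∈ rest', f' v < 2 * (c' : ℕ) := by
        intro c' hc'
        rw [hf'v]
        have : (c : ℕ) < (c' : ℕ) := hlt c' hc'
        omega
      obtain ⟨leaf', steps'⟩ := ih E' f' hf'x hfv' hmono' hch' (List.pairwise_cons.mp hsort).2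
      constructor
      · intro j
        simpa [List.foldl_cons] using leaf' j
      · intro k hk
        match k with
        | 0 =>
            constructor
            · refine ⟨hEvc, fun w hEvw hpath => ?_⟩
              have hw := (hch w).mp hEvw
              rcases List.mem_cons.mp hw with h' | h'
              · simpa using h'
              · exfalso
                have hgc : (c :: rest').get ⟨0, hk⟩ = c := rfl
                rw [hgc] at hpath
                have hle := rtg_le hmono hpath
                have hwv : w ≠ v := hnv w h'
                rw [hfx w hwv, hfx c (Ne.symm hvc)] at hle
                have : (c : ℕ) < (w : ℕ) := hlt w h'
                omega
            · have : (List.take 1 (c :: rest')).foldl (fun R c => reverseEdge R v c) E = E' := by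
                simp [List.foldl_cons, hE']
              rw [this]
              exact acyclic_of_mono hmono'
        | k + 1 =>
            have hk' : k < rest'.length := by simpa using hk
            have := steps' k hk'
            simpa [List.take_succ_cons, List.foldl_cons] using this

/-- Let G be a DAG on Fin n respecting a topological ordering, and let v be a
node whose children, listed in topological order, are the list cs.  Reversing
the edges v → cₖ in order k = 1,…,H turns v into a leaf (no outgoing edges),
and at each step k the edge v → cₖ is the unique directed path from v to cₖ in
the current graph, so the reversal preserves acyclicity. -/
theorem reverse_all_children {n : ℕ} (E : Fin n → Fin n → Prop)
    (htopo : ∀ i j, E i j → i < j) (v : Fin n) (cs : List (Fin n))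
    (hchildren : ∀ j, E v j ↔ j ∈ cs) (hsorted : cs.Pairwise (· < ·)) :
    (∀ j, ¬ (cs.foldl (fun R c => reverseEdge R v c) E) v j)
    ∧ ∀ (k : ℕ) (hk : k < cs.length),
        UniquePath ((cs.take k).foldl (fun R c => reverseEdge R v c) E) v
          (cs.get ⟨k, hk⟩)
        ∧ Acyclic ((cs.take (k + 1)).foldl (fun R c => reverseEdge R v c) E) := by
  refine main_aux v cs E (fun x => 2 * (x : ℕ)) (fun _ _ => rfl) ?_ ?_ hchildren hsorted
  · intro c hc
    have h1 : (v : ℕ) < (c : ℕ) := htopo v c ((hchildren c).mpr hc)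
    show 2 * (v : ℕ) < 2 * (c : ℕ)
    omega
  · intro a b hab
    have h1 : (a : ℕ) < (b : ℕ) := htopo a b hab
    show 2 * (a : ℕ) < 2 * (b : ℕ)
    omega
end

section
/- Let w₁,…,w_{k+N} be a straight-line computation where w₁,…,w_k are inputs and each subsequent wⱼ is obtained from earlier values via addition, subtraction, multiplication, or division, and suppose a recursive analysis certifies that w is affine in input x with symbolic coefficients (p, q) computed by: base cases (1,0) for w = x and (0, w) for other inputs/constants, sum/difference of coefficients for ADD/SUB, and the appropriate product/quotient rules for MUL/DIV when one factor (resp. the divisor) has zero slope. Then indeed w = p·x + q as functions of the inputs, and p, q do not depend on x. -/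
/-- Straight-line computations built from inputs, constants and the primitive
operations ADD, SUB, MUL, DIV. -/
inductive Expr (k : ℕ) where
  | input : Fin k → Expr k
  | const : ℝ → Expr k
  | add : Expr k → Expr k → Expr k
  | sub : Expr k → Expr k → Expr k
  | mul : Expr k → Expr k → Expr k
  | div : Expr k → Expr k → Expr k

noncomputable def Expr.eval {k : ℕ} (env : Fin k → ℝ) : Expr k → ℝ
  | .input i => env i
  | .const r => r
  | .add a b => a.eval env + b.eval env
  | .sub a b => a.eval env - b.eval env
  | .mul a b => a.eval env * b.eval env
  | .div a b => a.eval env / b.eval env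

/-- The expression does not (syntactically) use input x. -/
def Expr.NoDep {k : ℕ} (x : Fin k) : Expr k → Prop
  | .input i => i ≠ x
  | .const _ => True
  | .add a b => a.NoDep x ∧ b.NoDep x
  | .sub a b => a.NoDep x ∧ b.NoDep x
  | .mul a b => a.NoDep x ∧ b.NoDep x
  | .div a b => a.NoDep x ∧ b.NoDep x

/-- The recursive AFFINE_COEFF analysis certifies that `w` is affine in input
`x` with symbolic slope `p` and intercept `q`: base cases (1,0) for w = x and
(0,w) for other inputs and expressions not depending on x; sum/difference of
coefficients for ADD/SUB; product/quotient rules for MUL/DIV when one factor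
(resp. the divisor) has zero slope. -/
inductive AffineCoeff {k : ℕ} (x : Fin k) : Expr k → Expr k → Expr k → Prop
  | self : AffineCoeff x (.input x) (.const 1) (.const 0)
  | inputOther (i : Fin k) (h : i ≠ x) :
      AffineCoeff x (.input i) (.const 0) (.input i)
  | const (r : ℝ) : AffineCoeff x (.const r) (.const 0) (.const r)
  | noDep (w : Expr k) (h : w.NoDep x) : AffineCoeff x w (.const 0) w
  | add {a b p₁ q₁ p₂ q₂ : Expr k} :
      AffineCoeff x a p₁ q₁ → AffineCoeff x b p₂ q₂ →
      AffineCoeff x (.add a b) (.add p₁ p₂) (.add q₁ q₂)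
  | sub {a b p₁ q₁ p₂ q₂ : Expr k} :
      AffineCoeff x a p₁ q₁ → AffineCoeff x b p₂ q₂ →
      AffineCoeff x (.sub a b) (.sub p₁ p₂) (.sub q₁ q₂)
  | mulRightConst {a b p₁ q₁ q₂ : Expr k} :
      AffineCoeff x a p₁ q₁ → AffineCoeff x b (.const 0) q₂ →
      AffineCoeff x (.mul a b) (.mul p₁ q₂) (.mul q₁ q₂)
  | mulLeftConst {a b q₁ p₂ q₂ : Expr k} :
      AffineCoeff x a (.const 0) q₁ → AffineCoeff x b p₂ q₂ →
      AffineCoeff x (.mul a b) (.mul q₁ p₂) (.mul q₁ q₂)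
  | div {a b p₁ q₁ q₂ : Expr k} :
      AffineCoeff x a p₁ q₁ → AffineCoeff x b (.const 0) q₂ →
      AffineCoeff x (.div a b) (.div p₁ q₂) (.div q₁ q₂)

def Expr.IndepOf {k : ℕ} (x : Fin k) (e : Expr k) : Prop :=
  ∀ (env : Fin k → ℝ) (t : ℝ), e.eval (Function.update env x t) = e.eval env

namespace Expr.IndepOf

variable {k : ℕ} {x : Fin k} {a b : Expr k}

theorem const (r : ℝ) : (Expr.const r).IndepOf x := fun _ _ => rfl

theorem input {i : Fin k} (h : i ≠ x) : (Expr.input i).IndepOf x :=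
  fun env t => by simp only [eval, Function.update_of_ne h]

theorem add (ha : a.IndepOf x) (hb : b.IndepOf x) : (a.add b).IndepOf x :=
  fun env t => by simp only [eval, ha env t, hb env t]

theorem sub (ha : a.IndepOf x) (hb : b.IndepOf x) : (a.sub b).IndepOf x :=
  fun env t => by simp only [eval, ha env t, hb env t]

theorem mul (ha : a.IndepOf x) (hb : b.IndepOf x) : (a.mul b).IndepOf x :=
  fun env t => by simp only [eval, ha env t, hb env t]

theorem div (ha : a.IndepOf x) (hb : b.IndepOf x) : (a.div b).IndepOf x :=
  fun env t => by simp only [eval, ha env t, hb env t]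

end Expr.IndepOf

theorem Expr.NoDep.indepOf {k : ℕ} {x : Fin k} {e : Expr k} (h : e.NoDep x) :
    e.IndepOf x := by
  induction e with
  | input i => exact .input h
  | const r => exact .const r
  | add a b iha ihb => exact (iha h.1).add (ihb h.2)
  | sub a b iha ihb => exact (iha h.1).sub (ihb h.2)
  | mul a b iha ihb => exact (iha h.1).mul (ihb h.2)
  | div a b iha ihb => exact (iha h.1).div (ihb h.2)

namespace AffineCoeff

variable {k : ℕ} {x : Fin k} {w p q : Expr k}

theorem indepOf_coeffs (h : AffineCoeff x w p q) : p.IndepOf x ∧ q.IndepOf x := by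
  induction h with
  | self => exact ⟨.const 1, .const 0⟩
  | inputOther i hi => exact ⟨.const 0, .input hi⟩
  | const r => exact ⟨.const 0, .const r⟩
  | noDep w hw => exact ⟨.const 0, hw.indepOf⟩
  | add _ _ iha ihb => exact ⟨iha.1.add ihb.1, iha.2.add ihb.2⟩
  | sub _ _ iha ihb => exact ⟨iha.1.sub ihb.1, iha.2.sub ihb.2⟩
  | mulRightConst _ _ iha ihb => exact ⟨iha.1.mul ihb.2, iha.2.mul ihb.2⟩
  | mulLeftConst _ _ iha ihb => exact ⟨iha.2.mul ihb.1, iha.2.mul ihb.2⟩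
  | div _ _ iha ihb => exact ⟨iha.1.div ihb.2, iha.2.div ihb.2⟩

theorem eval_eq (h : AffineCoeff x w p q) (env : Fin k → ℝ) :
    w.eval env = p.eval env * env x + q.eval env := by
  induction h with
  | self | inputOther | const | noDep => simp only [Expr.eval]; ring
  | add _ _ iha ihb | sub _ _ iha ihb | mulRightConst _ _ iha ihb
  | mulLeftConst _ _ iha ihb | div _ _ iha ihb =>
    simp only [Expr.eval] at iha ihb ⊢
    rw [iha, ihb]
    ring

end AffineCoeff

/-- Correctness of AFFINE_COEFF: if the analysis certifies coefficients (p, q)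
for w with respect to input x, then w = p·x + q as functions of the inputs, and
the values of p and q do not depend on the input x. -/
theorem affineCoeff_correct {k : ℕ} (x : Fin k) (w p q : Expr k)
    (h : AffineCoeff x w p q) :
    (∀ env : Fin k → ℝ, w.eval env = p.eval env * env x + q.eval env)
    ∧ (∀ (env : Fin k → ℝ) (t : ℝ),
        p.eval (Function.update env x t) = p.eval env
        ∧ q.eval (Function.update env x t) = q.eval env) :=
  ⟨h.eval_eq, fun env t => ⟨h.indepOf_coeffs.1 env t, h.indepOf_coeffs.2 env t⟩⟩
end
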